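/- Let Γ be a countable discrete group and (X,μ) a standard probability space. For all measure-preserving actions a, b, c of Γ on (X,μ) and all t ∈ [0,1]: d(t a + (1−t) c, t b + (1−t) c) ≤ t·d(a,b), and likewise d_s(t a + (1−t) c, t b + (1−t) c) ≤ t·d_s(a,b). -/

import Mathlib

open MeasureTheory Filter Topology Set

/-- A measure-preserving action of a group `Γ` on a measure space `(X, μ)`. -/
structure MPAction (Γ : Type*) [Group Γ] (X : Type*) [MeasurableSpace X]
    (μ : MeasureTheory.Measure X) where
  act : Γ → X → X
  measurePreserving_act : ∀ γ : Γ, MeasureTheory.MeasurePreserving (act γ) μ μ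
  act_one : ∀ x, act 1 x = x
  act_mul : ∀ γ δ x, act (γ * δ) x = act γ (act δ x)

namespace MPAction

variable {Γ : Type*} [Group Γ] {X : Type*} [MeasurableSpace X] {μ : Measure X}
  {Y : Type*} [MeasurableSpace Y] {ν : Measure Y}
  {W : Type*} [MeasurableSpace W] {ρ : Measure W}

/-- Weak containment of measure-preserving actions. -/
def WeaklyContained (a : MPAction Γ X μ) (b : MPAction Γ Y ν) : Prop :=
  ∀ (n : ℕ) (A : Fin n → Set X), (∀ i, MeasurableSet (A i)) →
    ∀ (F : Finset Γ) (ε : ℝ), 0 < ε →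
      ∃ B : Fin n → Set Y, (∀ i, MeasurableSet (B i)) ∧
        ∀ γ ∈ F, ∀ i j : Fin n,
          |(μ (a.act γ '' A i ∩ A j)).toReal - (ν (b.act γ '' B i ∩ B j)).toReal| < ε

/-- Weak equivalence of measure-preserving actions. -/
def WeakEquiv (a : MPAction Γ X μ) (b : MPAction Γ Y ν) : Prop :=
  WeaklyContained a b ∧ WeaklyContained b a

/-- A finite measurable partition of the space. -/
def IsPartition {k : ℕ} (A : Fin k → Set X) : Prop :=
  (∀ i, MeasurableSet (A i)) ∧ Pairwise (Function.onFun Disjoint A) ∧ (⋃ i, A i) = Set.univ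

/-- The compact set `C_{n,k}(a) ⊆ [0,1]^{n × k × k}`: the closure of the collection of
matrices of measures `μ(γ_p^a A_q ∩ A_r)` over all measurable `k`-partitions, with respect
to the fixed enumeration `e` of the group. -/
noncomputable def Cnk (e : ℕ → Γ) (a : MPAction Γ X μ) (n k : ℕ) :
    Set ((Fin n × Fin k × Fin k) → ℝ) :=
  closure { v | ∃ A : Fin k → Set X, IsPartition A ∧
    ∀ (p : Fin n) (q r : Fin k), v (p, q, r) = (μ (a.act (e p.1) '' A q ∩ A r)).toReal }

/-- The metric `d` on weak equivalence classes:
`d(a,b) = Σ_{n,k} 2^{-(n+k)} d_H(C_{n,k}(a), C_{n,k}(b))`. -/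
noncomputable def dWE (e : ℕ → Γ) (a : MPAction Γ X μ) (b : MPAction Γ Y ν) : ℝ :=
  ∑' nk : ℕ × ℕ, (2 : ℝ) ^ (-(nk.1 : ℤ) - (nk.2 : ℤ)) *
    Metric.hausdorffDist (Cnk e a nk.1 nk.2) (Cnk e b nk.1 nk.2)

section Mix

variable {ι : Type*} {Z : ι → Type*} [∀ i, MeasurableSpace (Z i)]

theorem measurable_sigmaMk' (i : ι) : Measurable (@Sigma.mk ι Z i) :=
  measurable_iff_le_map.2 (iInf_le _ i)

theorem measurable_of_sigma {δ : Type*} [MeasurableSpace δ] {f : Sigma Z → δ}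
    (hf : ∀ i, Measurable (f ∘ Sigma.mk i)) : Measurable f := by
  intro s hs
  rw [Sigma.instMeasurableSpace, MeasurableSpace.measurableSet_iInf]
  intro i
  exact hf i hs

/-- The measure `Σ_i λ_i ν_i` on the disjoint union `⊔_i Z_i`. -/
noncomputable def mixMeasure (lam : ι → ℝ) (νs : ∀ i, Measure (Z i)) :
    Measure ((i : ι) × Z i) :=
  Measure.sum fun i => ENNReal.ofReal (lam i) • (νs i).map (Sigma.mk i)

instance mixMeasure.instSFinite [Countable ι] (lam : ι → ℝ) (νs : ∀ i, Measure (Z i))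
    [∀ i, SFinite (νs i)] : SFinite (mixMeasure lam νs) := by
  unfold mixMeasure
  infer_instance

/-- The convex combination `Σ_i λ_i a_i` of measure-preserving actions, acting on the
disjoint union `⊔_i Z_i` with the measure `Σ_i λ_i ν_i`. -/
noncomputable def mix [Countable ι] {νs : ∀ i, Measure (Z i)} (lam : ι → ℝ)
    (a : ∀ i, MPAction Γ (Z i) (νs i)) : MPAction Γ ((i : ι) × Z i) (mixMeasure lam νs) where
  act γ p := ⟨p.1, (a p.1).act γ p.2⟩
  measurePreserving_act γ := by
    have hmeas : Measurable fun p : (i : ι) × Z i => (⟨p.1, (a p.1).act γ p.2⟩ : (i : ι) × Z i) := by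
      apply measurable_of_sigma
      intro i
      exact (measurable_sigmaMk' i).comp ((a i).measurePreserving_act γ).measurable
    refine ⟨hmeas, ?_⟩
    refine Measure.ext fun s hs => ?_
    rw [Measure.map_apply hmeas hs]
    rw [mixMeasure, Measure.sum_apply _ (hmeas hs), Measure.sum_apply _ hs]
    congr 1
    funext i
    rw [Measure.smul_apply, Measure.smul_apply,
      Measure.map_apply (measurable_sigmaMk' i) (hmeas hs),
      Measure.map_apply (measurable_sigmaMk' i) hs]
    congr 1
    have hpre : (Sigma.mk i) ⁻¹'
        ((fun p : (i : ι) × Z i => (⟨p.1, (a p.1).act γ p.2⟩ : (i : ι) × Z i)) ⁻¹' s)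
        = ((a i).act γ) ⁻¹' (Sigma.mk i ⁻¹' s) := rfl
    rw [hpre]
    exact ((a i).measurePreserving_act γ).measure_preimage
      ((measurable_sigmaMk' i) hs).nullMeasurableSet
  act_one p := by
    cases p with
    | mk i x => simp only [(a i).act_one]
  act_mul γ δ p := by
    cases p with
    | mk i x => simp only [(a i).act_mul]

end Mix

/-- The binary convex combination `t a + (1 - t) b` of two actions on `(X, μ)`,
realized on the disjoint union of two copies of `X` carrying measures `tμ` and `(1-t)μ`. -/
noncomputable def convComb (t : ℝ) (a b : MPAction Γ X μ) :
    MPAction Γ ((_ : Fin 2) × X) (mixMeasure ![t, 1 - t] fun _ => μ) :=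
  mix (νs := fun _ => μ) ![t, 1 - t] ![a, b]

/-- The trivial action. -/
def trivAction (Γ : Type*) [Group Γ] (Y : Type*) [MeasurableSpace Y] (ν : Measure Y) :
    MPAction Γ Y ν where
  act _ y := y
  measurePreserving_act _ := MeasurePreserving.id ν
  act_one _ := rfl
  act_mul _ _ _ := rfl

/-- The product of two measure-preserving actions. -/
noncomputable def prodAction [SFinite μ] [SFinite ν] (a : MPAction Γ X μ) (b : MPAction Γ Y ν) :
    MPAction Γ (X × Y) (μ.prod ν) where
  act γ := Prod.map (a.act γ) (b.act γ)
  measurePreserving_act γ := (a.measurePreserving_act γ).prod (b.measurePreserving_act γ)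
  act_one p := by simp [Prod.map, a.act_one, b.act_one]
  act_mul γ δ p := by simp [Prod.map, a.act_mul, b.act_mul]

/-- Stable weak containment: `a ≺_s b` iff `a ≺ ι × b`, where `ι` is the trivial action of `Γ`
on the standard probability space `(X₀, μ₀)`. -/
def StableWeaklyContained {X₀ : Type*} [MeasurableSpace X₀] (μ₀ : Measure X₀) [SFinite μ₀]
    (a : MPAction Γ W ρ) (b : MPAction Γ Y ν) [SFinite ν] : Prop :=
  WeaklyContained a (prodAction (trivAction Γ X₀ μ₀) b)

/-- Stable weak equivalence. -/
def StableWeakEquiv {X₀ : Type*} [MeasurableSpace X₀] (μ₀ : Measure X₀) [SFinite μ₀]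
    (a : MPAction Γ W ρ) [SFinite ρ] (b : MPAction Γ Y ν) [SFinite ν] : Prop :=
  StableWeaklyContained μ₀ a b ∧ StableWeaklyContained μ₀ b a

/-- An action is ergodic if every strictly invariant measurable set is null or conull. -/
def IsErgodicAction (a : MPAction Γ X μ) : Prop :=
  ∀ A : Set X, MeasurableSet A → (∀ γ, a.act γ ⁻¹' A = A) → μ A = 0 ∨ μ Aᶜ = 0

/-- An action is (essentially) free if almost every point has trivial stabilizer. -/
def IsFreeAction (a : MPAction Γ X μ) : Prop :=
  ∀ᵐ x ∂μ, ∀ γ : Γ, γ ≠ 1 → a.act γ x ≠ x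

end MPAction

namespace MPAction

/-- The metric `d_s` on stable weak equivalence classes: `d_s(a,b) = d(a × ι, b × ι)`, where
`ι` is the trivial action of `Γ` on the standard probability space `(X₀,μ₀)`. -/
noncomputable def dS {Γ : Type*} [Group Γ] {X₀ : Type*} [MeasurableSpace X₀]
    (μ₀ : Measure X₀) [SFinite μ₀] (e : ℕ → Γ)
    {W : Type*} [MeasurableSpace W] {ρ : Measure W} [SFinite ρ]
    {Y : Type*} [MeasurableSpace Y] {ν : Measure Y} [SFinite ν]
    (a : MPAction Γ W ρ) (b : MPAction Γ Y ν) : ℝ :=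
  dWE e (prodAction a (trivAction Γ X₀ μ₀)) (prodAction b (trivAction Γ X₀ μ₀))

end MPAction

/-!
A measurable partition of the disjoint union `X ⊔ X` is the same thing as a pair of partitions
of the two copies, and `μ(γ A_q ∩ A_r)` splits additively over the copies. Hence the set of
statistics of `t a + (1 - t) c` is the Minkowski combination `t • S(a) + (1 - t) • S(c)` of the
statistics sets of `a` and `c`. Adding the common set `(1 - t) • S(c)` does not increase Hausdorff
distance and scaling by `t` multiplies it by `t`; summing over `(n, k)` gives the bound for `d`.
The action `(t a + (1 - t) c) × ι` splits in the same way into `a × ι` and `c × ι`, which gives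
the bound for `d_s`.
-/

open Metric
open scoped Pointwise

section HausdorffDistance

variable {E : Type*} [SeminormedAddCommGroup E]

theorem Metric.hausdorffDist_add_right_le {s t : Set E} (u : Set E)
    (h : hausdorffEDist s t ≠ ⊤) : hausdorffDist (s + u) (t + u) ≤ hausdorffDist s t := by
  have half : ∀ s t : Set E, ∀ z ∈ s + u, infEDist z (t + u) ≤ hausdorffEDist s t := by
    rintro s t _ ⟨x, hx, v, hv, rfl⟩
    calc infEDist (x + v) (t + u) ≤ infEDist (x + v) ((· + v) '' t) :=
          infEDist_anti (by rintro _ ⟨y, hy, rfl⟩; exact add_mem_add hy hv)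
      _ = infEDist x t := infEDist_image (isometry_add_right v)
      _ ≤ hausdorffEDist s t := infEDist_le_hausdorffEDist_of_mem hx
  refine ENNReal.toReal_mono h (hausdorffEDist_le_of_infEDist (half s t) fun z hz => ?_)
  rw [hausdorffEDist_comm]
  exact half t s z hz

theorem Metric.hausdorffDist_le_of_subset_closedBall {s t : Set E} {x : E} {r : ℝ}
    (hr : 0 ≤ r) (hs : s ⊆ closedBall x r) (ht : t ⊆ closedBall x r) :
    hausdorffDist s t ≤ 2 * r := by
  rcases s.eq_empty_or_nonempty with rfl | hs'
  · simpa using hr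
  rcases t.eq_empty_or_nonempty with rfl | ht'
  · simpa using hr
  calc hausdorffDist s t ≤ diam (s ∪ t) :=
        hausdorffDist_le_diam hs' (isBounded_closedBall.subset hs) ht'
          (isBounded_closedBall.subset ht)
    _ ≤ diam (closedBall x r) := diam_mono (union_subset hs ht) isBounded_closedBall
    _ ≤ 2 * r := diam_closedBall hr

variable {𝕜 : Type*} [NormedDivisionRing 𝕜] [Module 𝕜 E] [NormSMulClass 𝕜 E]

theorem Metric.hausdorffEDist_smul₀ {c : 𝕜} (hc : c ≠ 0) (s t : Set E) :
    hausdorffEDist (c • s) (c • t) = ‖c‖₊ • hausdorffEDist s t := by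
  have h : ∀ s t : Set E, ⨆ x ∈ c • s, infEDist x (c • t) = ‖c‖₊ • ⨆ x ∈ s, infEDist x t := by
    intro s t
    rw [← image_smul, iSup_image]
    simp only [infEDist_smul₀ hc, ENNReal.smul_def, smul_eq_mul, ENNReal.mul_iSup]
  rw [hausdorffEDist, hausdorffEDist, h, h]
  simp only [ENNReal.smul_def, smul_eq_mul, mul_max]

theorem Metric.hausdorffDist_smul₀ (c : 𝕜) (s t : Set E) :
    hausdorffDist (c • s) (c • t) = ‖c‖ * hausdorffDist s t := by
  rcases eq_or_ne c 0 with rfl | hc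
  · rcases s.eq_empty_or_nonempty with rfl | hs
    · simp
    rcases t.eq_empty_or_nonempty with rfl | ht
    · simp
    simp [zero_smul_set hs, zero_smul_set ht]
  · simp only [hausdorffDist, hausdorffEDist_smul₀ hc, ENNReal.toReal_smul, NNReal.smul_def,
      coe_nnnorm, smul_eq_mul]

end HausdorffDistance

theorem measurableEmbedding_sigmaMk {ι : Type*} {Z : ι → Type*} [∀ i, MeasurableSpace (Z i)]
    (i : ι) : MeasurableEmbedding (@Sigma.mk ι Z i) := by
  refine ⟨sigma_mk_injective, MPAction.measurable_sigmaMk' i, fun s hs => ?_⟩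
  rw [Sigma.instMeasurableSpace, MeasurableSpace.measurableSet_iInf]
  intro j
  rcases eq_or_ne i j with rfl | hij
  · show MeasurableSet (Sigma.mk i ⁻¹' (Sigma.mk i '' s))
    rwa [sigma_mk_preimage_image_eq_self]
  · show MeasurableSet (Sigma.mk j ⁻¹' (Sigma.mk i '' s))
    rw [sigma_mk_preimage_image' hij]
    exact MeasurableSet.empty

theorem preimage_image_union_image_of_disjoint {W U : Type*} {f g : W → U}
    (hf : Function.Injective f) (hfg : Disjoint (range f) (range g)) (A C : Set W) :
    f ⁻¹' (f '' A ∪ g '' C) = A := by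
  rw [preimage_union, hf.preimage_image,
    preimage_eq_empty (hfg.symm.mono_left (image_subset_range g C)), union_empty]

section Gluing

variable {W U : Type*} [MeasurableSpace W] [MeasurableSpace U] {f g : W → U}

theorem MPAction.IsPartition.preimage {k : ℕ} {B : Fin k → Set U} (hB : MPAction.IsPartition B)
    (hf : Measurable f) : MPAction.IsPartition fun q => f ⁻¹' B q := by
  refine ⟨fun q => hf (hB.1 q), fun q r hqr => (hB.2.1 hqr).preimage f, ?_⟩
  rw [← preimage_iUnion, hB.2.2, preimage_univ]

theorem MPAction.IsPartition.image_union_image (hf : MeasurableEmbedding f)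
    (hg : MeasurableEmbedding g) (hfg : IsCompl (range f) (range g)) {k : ℕ}
    {A C : Fin k → Set W} (hA : MPAction.IsPartition A) (hC : MPAction.IsPartition C) :
    MPAction.IsPartition fun q => f '' A q ∪ g '' C q := by
  have hfg' : ∀ s s' : Set W, Disjoint (f '' s) (g '' s') := fun s s' =>
    hfg.disjoint.mono (image_subset_range f s) (image_subset_range g s')
  refine ⟨fun q => (hf.measurableSet_image.2 (hA.1 q)).union (hg.measurableSet_image.2 (hC.1 q)),
    fun q r hqr => ?_, ?_⟩
  · rw [Function.onFun, disjoint_union_left, disjoint_union_right, disjoint_union_right]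
    exact ⟨⟨(disjoint_image_iff hf.injective).2 (hA.2.1 hqr), hfg' _ _⟩,
      (hfg' _ _).symm, (disjoint_image_iff hg.injective).2 (hC.2.1 hqr)⟩
  · rw [iUnion_union_distrib, ← image_iUnion, ← image_iUnion, hA.2.2, hC.2.2, image_univ,
      image_univ]
    exact hfg.sup_eq_top

end Gluing

namespace MPAction

variable {Γ : Type*} [Group Γ] {X : Type*} [MeasurableSpace X] {μ : Measure X}
  {Y : Type*} [MeasurableSpace Y] {ν : Measure Y}

theorem act_image_eq_preimage (a : MPAction Γ X μ) (γ : Γ) (A : Set X) :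
    a.act γ '' A = a.act γ⁻¹ ⁻¹' A :=
  congrFun (image_eq_preimage_of_inverse
    (fun x => by rw [← a.act_mul, inv_mul_cancel, a.act_one])
    (fun x => by rw [← a.act_mul, mul_inv_cancel, a.act_one])) A

theorem measurableSet_act_image (a : MPAction Γ X μ) (γ : Γ) {A : Set X}
    (hA : MeasurableSet A) : MeasurableSet (a.act γ '' A) := by
  rw [act_image_eq_preimage]
  exact (a.measurePreserving_act γ⁻¹).measurable hA

theorem preimage_act_image_of_semiconj {W : Type*} [MeasurableSpace W] {ρ : Measure W}
    (a : MPAction Γ W ρ) (d : MPAction Γ X μ) {f : W → X}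
    (hf : ∀ γ, Function.Semiconj f (a.act γ) (d.act γ)) (γ : Γ) (B : Set X) :
    f ⁻¹' (d.act γ '' B) = a.act γ '' (f ⁻¹' B) := by
  rw [act_image_eq_preimage, act_image_eq_preimage, ← preimage_comp, ← (hf γ⁻¹).comp_eq,
    preimage_comp]

/-- The point of `C_{n,k}(a)` given by the partition `A`, before taking closures. -/
noncomputable def profile (e : ℕ → Γ) (a : MPAction Γ X μ) (n : ℕ) {k : ℕ}
    (A : Fin k → Set X) : Fin n × Fin k × Fin k → ℝ :=
  fun pqr => μ.real (a.act (e pqr.1) '' A pqr.2.1 ∩ A pqr.2.2)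

noncomputable def profileSet (e : ℕ → Γ) (a : MPAction Γ X μ) (n k : ℕ) :
    Set (Fin n × Fin k × Fin k → ℝ) :=
  profile e a n '' {A | IsPartition A}

theorem Cnk_eq_closure_profileSet (e : ℕ → Γ) (a : MPAction Γ X μ) (n k : ℕ) :
    Cnk e a n k = closure (profileSet e a n k) := by
  refine congrArg closure (Set.ext fun v => ⟨?_, ?_⟩)
  · rintro ⟨A, hA, hv⟩
    exact ⟨A, hA, funext fun ⟨p, q, r⟩ => (hv p q r).symm⟩
  · rintro ⟨A, hA, rfl⟩
    exact ⟨A, hA, fun _ _ _ => rfl⟩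

theorem profileSet_subset_closedBall [IsProbabilityMeasure μ] (e : ℕ → Γ) (a : MPAction Γ X μ)
    (n k : ℕ) : profileSet e a n k ⊆ closedBall 0 1 := by
  rintro _ ⟨A, -, rfl⟩
  refine mem_closedBall_zero_iff.2 ((pi_norm_le_iff_of_nonneg zero_le_one).2 fun _ => ?_)
  exact (Real.norm_of_nonneg measureReal_nonneg).trans_le measureReal_le_one

theorem Cnk_subset_closedBall [IsProbabilityMeasure μ] (e : ℕ → Γ) (a : MPAction Γ X μ)
    (n k : ℕ) : Cnk e a n k ⊆ closedBall 0 1 := by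
  rw [Cnk_eq_closure_profileSet]
  exact closure_minimal (profileSet_subset_closedBall e a n k) isClosed_closedBall

theorem summable_zpow_mul_hausdorffDist_Cnk [IsProbabilityMeasure μ] [IsProbabilityMeasure ν]
    (e : ℕ → Γ) (a : MPAction Γ X μ) (b : MPAction Γ Y ν) :
    Summable fun nk : ℕ × ℕ => (2 : ℝ) ^ (-(nk.1 : ℤ) - (nk.2 : ℤ)) *
      hausdorffDist (Cnk e a nk.1 nk.2) (Cnk e b nk.1 nk.2) := by
  have hgeo : Summable fun nk : ℕ × ℕ => (2 : ℝ) ^ (-(nk.1 : ℤ) - (nk.2 : ℤ)) := by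
    refine (summable_geometric_two.mul_of_nonneg summable_geometric_two (fun _ => by positivity)
      fun _ => by positivity).congr fun nk => ?_
    simp [zpow_sub₀, div_eq_mul_inv]
  refine Summable.of_nonneg_of_le (fun _ => mul_nonneg (by positivity) hausdorffDist_nonneg)
    (fun nk => mul_le_mul_of_nonneg_left ?_ (by positivity)) (hgeo.mul_right 2)
  simpa using hausdorffDist_le_of_subset_closedBall zero_le_one
    (Cnk_subset_closedBall e a nk.1 nk.2) (Cnk_subset_closedBall e b nk.1 nk.2)

theorem dWE_le_mul_of_hausdorffDist_Cnk_le [IsProbabilityMeasure μ] [IsProbabilityMeasure ν]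
    {U₁ U₂ : Type*} [MeasurableSpace U₁] [MeasurableSpace U₂] {κ₁ : Measure U₁}
    {κ₂ : Measure U₂} {e : ℕ → Γ} {a : MPAction Γ X μ} {b : MPAction Γ Y ν}
    {d₁ : MPAction Γ U₁ κ₁} {d₂ : MPAction Γ U₂ κ₂} {t : ℝ}
    (h : ∀ n k, hausdorffDist (Cnk e d₁ n k) (Cnk e d₂ n k) ≤
      t * hausdorffDist (Cnk e a n k) (Cnk e b n k)) :
    dWE e d₁ d₂ ≤ t * dWE e a b := by
  have hab := (summable_zpow_mul_hausdorffDist_Cnk e a b).mul_left t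
  have hle : ∀ nk : ℕ × ℕ, (2 : ℝ) ^ (-(nk.1 : ℤ) - (nk.2 : ℤ)) *
      hausdorffDist (Cnk e d₁ nk.1 nk.2) (Cnk e d₂ nk.1 nk.2) ≤
      t * ((2 : ℝ) ^ (-(nk.1 : ℤ) - (nk.2 : ℤ)) *
        hausdorffDist (Cnk e a nk.1 nk.2) (Cnk e b nk.1 nk.2)) := fun nk => by
    rw [mul_left_comm]
    exact mul_le_mul_of_nonneg_left (h _ _) (by positivity)
  calc dWE e d₁ d₂ ≤ _ := Summable.tsum_le_tsum hle
        (.of_nonneg_of_le (fun _ => mul_nonneg (by positivity) hausdorffDist_nonneg) hle hab) hab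
    _ = t * dWE e a b := tsum_mul_left

section ConvComb

variable {W U : Type*} [MeasurableSpace W] [MeasurableSpace U] {ρ : Measure W} {κ : Measure U}

/-- `d` is isomorphic to `t a + (1 - t) c`, with `emb₀`, `emb₁` the inclusions of the two copies. -/
structure ConvCombSplitting (t : ℝ) (d : MPAction Γ U κ) (a c : MPAction Γ W ρ) where
  emb₀ : W → U
  emb₁ : W → U
  measurableEmbedding₀ : MeasurableEmbedding emb₀
  measurableEmbedding₁ : MeasurableEmbedding emb₁
  isCompl_range : IsCompl (range emb₀) (range emb₁)
  semiconj₀ : ∀ γ, Function.Semiconj emb₀ (a.act γ) (d.act γ)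
  semiconj₁ : ∀ γ, Function.Semiconj emb₁ (c.act γ) (d.act γ)
  measure_eq : κ = ENNReal.ofReal t • ρ.map emb₀ + ENNReal.ofReal (1 - t) • ρ.map emb₁

namespace ConvCombSplitting

variable [IsFiniteMeasure ρ] {t : ℝ} {d : MPAction Γ U κ} {a c : MPAction Γ W ρ}

theorem measureReal_apply (D : ConvCombSplitting t d a c) (ht0 : 0 ≤ t) (ht1 : t ≤ 1)
    {S : Set U} (hS : MeasurableSet S) :
    κ.real S = t * ρ.real (D.emb₀ ⁻¹' S) + (1 - t) * ρ.real (D.emb₁ ⁻¹' S) := by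
  rw [measureReal_def, DFunLike.congr_fun D.measure_eq S, Measure.add_apply, Measure.smul_apply,
    Measure.smul_apply, Measure.map_apply D.measurableEmbedding₀.measurable hS,
    Measure.map_apply D.measurableEmbedding₁.measurable hS, smul_eq_mul, smul_eq_mul,
    ENNReal.toReal_add (by finiteness) (by finiteness), ENNReal.toReal_mul, ENNReal.toReal_mul,
    ENNReal.toReal_ofReal ht0, ENNReal.toReal_ofReal (sub_nonneg.2 ht1)]
  rfl

theorem profile_eq (D : ConvCombSplitting t d a c) (ht0 : 0 ≤ t) (ht1 : t ≤ 1) (e : ℕ → Γ)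
    (n : ℕ) {k : ℕ} {B : Fin k → Set U} (hB : ∀ q, MeasurableSet (B q)) :
    profile e d n B = t • profile e a n (fun q => D.emb₀ ⁻¹' B q) +
      (1 - t) • profile e c n (fun q => D.emb₁ ⁻¹' B q) := by
  funext ⟨p, q, r⟩
  simp only [profile, Pi.add_apply, Pi.smul_apply, smul_eq_mul]
  rw [D.measureReal_apply ht0 ht1 ((measurableSet_act_image d _ (hB q)).inter (hB r)),
    preimage_inter, preimage_inter, preimage_act_image_of_semiconj a d D.semiconj₀,
    preimage_act_image_of_semiconj c d D.semiconj₁]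

theorem profileSet_eq (D : ConvCombSplitting t d a c) (ht0 : 0 ≤ t) (ht1 : t ≤ 1) (e : ℕ → Γ)
    (n k : ℕ) :
    profileSet e d n k = t • profileSet e a n k + (1 - t) • profileSet e c n k := by
  ext v
  constructor
  · rintro ⟨B, hB, rfl⟩
    rw [D.profile_eq ht0 ht1 e n hB.1]
    exact add_mem_add (smul_mem_smul_set ⟨_, hB.preimage D.measurableEmbedding₀.measurable, rfl⟩)
      (smul_mem_smul_set ⟨_, hB.preimage D.measurableEmbedding₁.measurable, rfl⟩)
  · rintro ⟨_, ⟨_, ⟨A, hA, rfl⟩, rfl⟩, _, ⟨_, ⟨C, hC, rfl⟩, rfl⟩, rfl⟩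
    have hAC := hA.image_union_image D.measurableEmbedding₀ D.measurableEmbedding₁
      D.isCompl_range hC
    have h₀ : (fun q => D.emb₀ ⁻¹' (D.emb₀ '' A q ∪ D.emb₁ '' C q)) = A := funext fun q =>
      preimage_image_union_image_of_disjoint D.measurableEmbedding₀.injective
        D.isCompl_range.disjoint _ _
    have h₁ : (fun q => D.emb₁ ⁻¹' (D.emb₀ '' A q ∪ D.emb₁ '' C q)) = C := funext fun q => by
      rw [union_comm]
      exact preimage_image_union_image_of_disjoint D.measurableEmbedding₁.injective
        D.isCompl_range.disjoint.symm _ _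
    exact ⟨_, hAC, by rw [D.profile_eq ht0 ht1 e n hAC.1, h₀, h₁]⟩

end ConvCombSplitting

variable [IsProbabilityMeasure ρ] {U' : Type*} [MeasurableSpace U'] {κ' : Measure U'}
  {t : ℝ} {d : MPAction Γ U κ} {d' : MPAction Γ U' κ'} {a b c : MPAction Γ W ρ}

theorem hausdorffDist_Cnk_le_of_convCombSplitting (ht0 : 0 ≤ t) (ht1 : t ≤ 1)
    (D : ConvCombSplitting t d a c) (D' : ConvCombSplitting t d' b c) (e : ℕ → Γ) (n k : ℕ) :
    hausdorffDist (Cnk e d n k) (Cnk e d' n k) ≤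
      t * hausdorffDist (Cnk e a n k) (Cnk e b n k) := by
  simp only [Cnk_eq_closure_profileSet, hausdorffDist_closure, D.profileSet_eq ht0 ht1,
    D'.profileSet_eq ht0 ht1]
  rcases (profileSet e a n k).eq_empty_or_nonempty with ha | ha
  · have hb : profileSet e b n k = ∅ := by simpa [profileSet] using ha
    simp [ha, hb]
  have hb : (profileSet e b n k).Nonempty := by simpa [profileSet] using ha
  have hbdd := fun x : MPAction Γ W ρ => isBounded_closedBall.subset
    (profileSet_subset_closedBall e x n k)
  calc _ ≤ hausdorffDist (t • profileSet e a n k) (t • profileSet e b n k) :=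
        hausdorffDist_add_right_le _ (hausdorffEDist_ne_top_of_nonempty_of_bounded ha.smul_set
          hb.smul_set ((hbdd a).smul₀ t) ((hbdd b).smul₀ t))
    _ = t * hausdorffDist (profileSet e a n k) (profileSet e b n k) := by
        rw [hausdorffDist_smul₀, Real.norm_of_nonneg ht0]

theorem dWE_le_of_convCombSplitting (ht0 : 0 ≤ t) (ht1 : t ≤ 1)
    (D : ConvCombSplitting t d a c) (D' : ConvCombSplitting t d' b c) (e : ℕ → Γ) :
    dWE e d d' ≤ t * dWE e a b :=
  dWE_le_mul_of_hausdorffDist_Cnk_le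
    (hausdorffDist_Cnk_le_of_convCombSplitting ht0 ht1 D D' e)

end ConvComb

noncomputable def convCombSplitting (t : ℝ) (a c : MPAction Γ X μ) :
    ConvCombSplitting t (convComb t a c) a c where
  emb₀ := Sigma.mk (β := fun _ : Fin 2 => X) 0
  emb₁ := Sigma.mk (β := fun _ : Fin 2 => X) 1
  measurableEmbedding₀ := measurableEmbedding_sigmaMk _
  measurableEmbedding₁ := measurableEmbedding_sigmaMk _
  isCompl_range := by
    rw [range_sigmaMk, range_sigmaMk]
    refine IsCompl.preimage _ ⟨?_, ?_⟩ <;> simp [codisjoint_iff, Set.ext_iff, Fin.forall_fin_two]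
  semiconj₀ _ _ := rfl
  semiconj₁ _ _ := rfl
  measure_eq := by
    rw [mixMeasure, Measure.sum_fintype, Fin.sum_univ_two]
    rfl

noncomputable def ConvCombSplitting.prodAction {W U : Type*} [MeasurableSpace W]
    [MeasurableSpace U] {ρ : Measure W} {κ : Measure U} [SFinite ρ] [SFinite κ] [SFinite ν]
    {t : ℝ} {d : MPAction Γ U κ} {a c : MPAction Γ W ρ} (D : ConvCombSplitting t d a c)
    (f : MPAction Γ Y ν) :
    ConvCombSplitting t (prodAction d f) (prodAction a f) (prodAction c f) where
  emb₀ := Prod.map D.emb₀ id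
  emb₁ := Prod.map D.emb₁ id
  measurableEmbedding₀ := D.measurableEmbedding₀.prodMap .id
  measurableEmbedding₁ := D.measurableEmbedding₁.prodMap .id
  isCompl_range := by
    simpa only [range_prodMap, range_id, prod_univ] using D.isCompl_range.preimage Prod.fst
  semiconj₀ γ p := congrArg (·, f.act γ p.2) (D.semiconj₀ γ p.1)
  semiconj₁ γ p := congrArg (·, f.act γ p.2) (D.semiconj₁ γ p.1)
  measure_eq := by
    have hmap : ∀ g : W → U, Measurable g → (ρ.map g).prod ν = (ρ.prod ν).map (Prod.map g id) :=
      fun g hg => by simpa using Measure.map_prod_map ρ ν hg measurable_id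
    rw [congrArg (Measure.prod · ν) D.measure_eq, Measure.add_prod, Measure.prod_smul_left,
      Measure.prod_smul_left, hmap _ D.measurableEmbedding₀.measurable, hmap _ D.measurableEmbedding₁.measurable]

end MPAction

theorem dWE_convComb_le_general
    (Γ : Type) [Group Γ]
    (X : Type) [MeasurableSpace X]
    (μ : Measure X) [IsProbabilityMeasure μ]
    (e : ℕ → Γ)
    (a b c : MPAction Γ X μ) (t : ℝ) (ht : t ∈ Set.Icc (0:ℝ) 1) :
    MPAction.dWE e (MPAction.convComb t a c) (MPAction.convComb t b c) ≤
        t * MPAction.dWE e a b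
    ∧ MPAction.dS μ e (MPAction.convComb t a c) (MPAction.convComb t b c) ≤
        t * MPAction.dS μ e a b := by
  obtain ⟨ht0, ht1⟩ := ht
  have hsplit := fun p : MPAction Γ X μ => MPAction.convCombSplitting t p c
  exact ⟨MPAction.dWE_le_of_convCombSplitting ht0 ht1 (hsplit a) (hsplit b) e,
    MPAction.dWE_le_of_convCombSplitting ht0 ht1 ((hsplit a).prodAction (.trivAction Γ X μ))
      ((hsplit b).prodAction (.trivAction Γ X μ)) e⟩

/-- For all measure-preserving actions `a, b, c` of a countable group `Γ` on
a standard probability space `(X,μ)` and all `t ∈ [0,1]`: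
`d(t a + (1−t) c, t b + (1−t) c) ≤ t·d(a,b)`, and likewise for the metric `d_s`. -/
theorem dWE_convComb_le
    (Γ : Type) [Group Γ] [Countable Γ]
    (X : Type) [MeasurableSpace X] [StandardBorelSpace X]
    (μ : Measure X) [IsProbabilityMeasure μ] [NullSingletonClass μ]
    (e : ℕ → Γ) (he : Function.Surjective e)
    (a b c : MPAction Γ X μ) (t : ℝ) (ht : t ∈ Set.Icc (0:ℝ) 1) :
    MPAction.dWE e (MPAction.convComb t a c) (MPAction.convComb t b c) ≤
        t * MPAction.dWE e a b
    ∧ MPAction.dS μ e (MPAction.convComb t a c) (MPAction.convComb t b c) ≤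
        t * MPAction.dS μ e a b :=
  dWE_convComb_le_general Γ X μ e a b c t ht
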